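/- Let α > 0, β > 0, and ξ ∈ ℝ with |ξ| > 1; set ε = 1 if ξ < -1 and ε = -1 if ξ > 1. For each n ≥ 1 the polynomial A_n has a smallest real zero μ_{1,n}, and μ_{1,n} → 0 as n → ∞. -/

import Mathlib

open Polynomial Filter

/-- The coefficient `B_n` of the Jacobi case (a). -/
noncomputable def BcoJ (α β ξ ε : ℝ) (n : ℕ) : ℝ :=
  ε / ((n : ℝ) * ((n : ℝ) + α + β - 1)) *
    (ξ - (β - α) * (α + β - 2) /
      ((2 * (n : ℝ) + α + β - 2) * (2 * (n : ℝ) + α + β)))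

/-- The coefficient `C_n` of the Jacobi case (a). -/
noncomputable def CcoJ (α β : ℝ) (n : ℕ) : ℝ :=
  4 * ((n : ℝ) + α - 1) * ((n : ℝ) + β - 1) /
    (((n : ℝ) - 1) * ((n : ℝ) + α + β - 1) * (2 * (n : ℝ) + α + β - 1) *
      (2 * (n : ℝ) + α + β - 2) ^ 2 * (2 * (n : ℝ) + α + β - 3))

/-- The polynomials `A_n(λ)` of the Jacobi case (a). -/
noncomputable def ApolyJ (α β ξ ε : ℝ) : ℕ → Polynomial ℝ
  | 0 => 1
  | 1 => Polynomial.X +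
      Polynomial.C (ε * ((1 + α + β) * (2 + α + β) * ξ ^ 2 +
          2 * (α - β) * (1 + α + β) * ξ + (α - β) ^ 2 - (2 + α + β)) /
        ((1 + α + β) * (2 + α + β) * (ξ * (α + β) - β + α)))
  | n + 2 =>
      (Polynomial.X + Polynomial.C (BcoJ α β ξ ε (n + 2))) * ApolyJ α β ξ ε (n + 1) -
        Polynomial.C (CcoJ α β (n + 2)) * ApolyJ α β ξ ε n

/-!
Up to the sign `(-1)^n`, and after exchanging `α ↔ β`, `ξ ↔ -ξ` when `ξ < -1`, the polynomials
`g_n` satisfy `g₀ = 1`, `g₁ = c₁ - x` and `g_{n+2} = (d_{n+2} - x) g_{n+1} - C_{n+2} g_n` with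
`C_n > 0` and `d_n → 0`. Explicit `t_n > 0` with `t₁ ≤ c₁` and
`C_{n+2} ≤ t_{n+1} (d_{n+2} - t_{n+2})` give, by induction, `g_{n+1}(x) ≥ t_{n+1} g_n(x) > 0` for
`x ≤ 0`, so every zero is positive. At the smallest zero `r` of `g_{n+1}` the recurrence gives
`g_{n+2}(r) = -C_{n+2} g_n(r) < 0`, so `g_{n+2}` has a smaller zero: the smallest zeros `μ_n`
decrease strictly. Hence `g_{n+1}` and `g_n` are positive at `μ_{n+2}`, and the recurrence there
forces `0 < μ_{n+2} < d_{n+2} → 0`.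
-/

namespace Polynomial

theorem exists_isLeast_setOf_eval_eq_zero_lt {p : ℝ[X]} {a b : ℝ} (hab : a ≤ b)
    (ha : 0 < p.eval a) (hb : p.eval b < 0) :
    ∃ r, IsLeast {x | p.eval x = 0} r ∧ r < b := by
  obtain ⟨z, hz, hz0⟩ := intermediate_value_Ioo' hab p.continuous.continuousOn ⟨hb, ha⟩
  have hp : p ≠ 0 := by rintro rfl; simp at ha
  obtain ⟨r, hr, hmin⟩ := Set.exists_min_image _ id (finite_setOfPred_isRoot hp) ⟨z, hz0⟩
  exact ⟨r, ⟨hr, hmin⟩, (hmin z hz0).trans_lt hz.2⟩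

theorem eval_pos_of_forall_lt_root {p : ℝ[X]} {a x : ℝ} (hax : a ≤ x) (ha : 0 < p.eval a)
    (hx : ∀ z, p.eval z = 0 → x < z) : 0 < p.eval x := by
  by_contra! h
  obtain ⟨z, hz, hz0⟩ := intermediate_value_Icc' hax p.continuous.continuousOn ⟨h, ha.le⟩
  exact (hx z hz0).not_ge hz.2

end Polynomial

def IsThreeTermRecurrence (q : ℕ → ℝ[X]) (d c : ℕ → ℝ) : Prop :=
  ∀ n x, (q (n + 2)).eval x = (d (n + 2) - x) * (q (n + 1)).eval x - c (n + 2) * (q n).eval x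

namespace IsThreeTermRecurrence

variable {q : ℕ → ℝ[X]} {d c : ℕ → ℝ}

theorem eval_pos_and_ratio_le_of_nonpos {t : ℕ → ℝ} (hrec : IsThreeTermRecurrence q d c)
    (hc : ∀ n, 0 ≤ c (n + 2)) (ht : ∀ n, 0 < t (n + 1))
    (hchain : ∀ n, c (n + 2) ≤ t (n + 1) * (d (n + 2) - t (n + 2)))
    {x : ℝ} (hx : x ≤ 0) (h0 : 0 < (q 0).eval x) (h1 : t 1 * (q 0).eval x ≤ (q 1).eval x)
    (n : ℕ) : 0 < (q n).eval x ∧ t (n + 1) * (q n).eval x ≤ (q (n + 1)).eval x := by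
  induction n with
  | zero => exact ⟨h0, h1⟩
  | succ n ih =>
    obtain ⟨hpos, hratio⟩ := ih
    have hpos' : 0 < (q (n + 1)).eval x := (mul_pos (ht n) hpos).trans_le hratio
    have hgap : 0 ≤ d (n + 2) - t (n + 2) :=
      nonneg_of_mul_nonneg_right ((hc n).trans (hchain n)) (ht n)
    have hcq : c (n + 2) * (q n).eval x ≤ (d (n + 2) - t (n + 2)) * (q (n + 1)).eval x :=
      calc c (n + 2) * (q n).eval x
          ≤ t (n + 1) * (d (n + 2) - t (n + 2)) * (q n).eval x := by gcongr; exact hchain n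
        _ = (d (n + 2) - t (n + 2)) * (t (n + 1) * (q n).eval x) := by ring
        _ ≤ (d (n + 2) - t (n + 2)) * (q (n + 1)).eval x := by gcongr
    refine ⟨hpos', ?_⟩
    rw [hrec n x]
    nlinarith [mul_nonneg (neg_nonneg.2 hx) hpos'.le]

theorem pos_of_eval_eq_zero (hpos : ∀ n x, x ≤ 0 → 0 < (q n).eval x) {n : ℕ} {r : ℝ}
    (hr : (q n).eval r = 0) : 0 < r := by
  by_contra! h
  exact (hpos n r h).ne' hr

theorem eval_pos_of_lt_isLeast (hpos : ∀ n x, x ≤ 0 → 0 < (q n).eval x) {n : ℕ} {r x : ℝ}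
    (hr : IsLeast {x | (q n).eval x = 0} r) (hx : x < r) : 0 < (q n).eval x :=
  eval_pos_of_forall_lt_root (min_le_left x 0) (hpos n _ (min_le_right x 0))
    fun _ hz => hx.trans_le (hr.2 hz)

theorem exists_isLeast_lt_of_isLeast (hrec : IsThreeTermRecurrence q d c)
    (hc : ∀ n, 0 < c (n + 2)) (hpos : ∀ n x, x ≤ 0 → 0 < (q n).eval x) {n : ℕ} {r : ℝ}
    (hr : IsLeast {x | (q (n + 1)).eval x = 0} r) (hn : 0 < (q n).eval r) :
    ∃ r', IsLeast {x | (q (n + 2)).eval x = 0} r' ∧ r' < r := by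
  have hneg : (q (n + 2)).eval r < 0 := by
    rw [hrec n r, hr.1, mul_zero, zero_sub, neg_lt_zero]
    exact mul_pos (hc n) hn
  exact exists_isLeast_setOf_eval_eq_zero_lt (pos_of_eval_eq_zero hpos hr.1).le
    (hpos (n + 2) 0 le_rfl) hneg

theorem exists_isLeast_succ_lt (hrec : IsThreeTermRecurrence q d c)
    (hc : ∀ n, 0 < c (n + 2)) (hpos : ∀ n x, x ≤ 0 → 0 < (q n).eval x)
    (hq0 : ∀ x, 0 < (q 0).eval x) (hq1 : ∃ r, IsLeast {x | (q 1).eval x = 0} r)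
    {n : ℕ} (hn : 1 ≤ n) :
    ∃ r r', IsLeast {x | (q n).eval x = 0} r ∧ IsLeast {x | (q (n + 1)).eval x = 0} r' ∧
      r' < r := by
  induction n, hn using Nat.le_induction with
  | base =>
    obtain ⟨r, hr⟩ := hq1
    obtain ⟨r', hr', hlt⟩ := hrec.exists_isLeast_lt_of_isLeast hc hpos hr (hq0 r)
    exact ⟨r, r', hr, hr', hlt⟩
  | succ n _ ih =>
    obtain ⟨r, r', hr, hr', hlt⟩ := ih
    obtain ⟨r'', hr'', hlt'⟩ :=
      hrec.exists_isLeast_lt_of_isLeast hc hpos hr' (eval_pos_of_lt_isLeast hpos hr hlt)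
    exact ⟨r', r'', hr', hr'', hlt'⟩

theorem lt_of_eval_eq_zero (hrec : IsThreeTermRecurrence q d c) (hc : ∀ n, 0 < c (n + 2))
    {n : ℕ} {r : ℝ} (hr : (q (n + 2)).eval r = 0) (h1 : 0 < (q (n + 1)).eval r)
    (h0 : 0 < (q n).eval r) : r < d (n + 2) := by
  have hprod : 0 < (d (n + 2) - r) * (q (n + 1)).eval r := by
    rw [hrec n r] at hr
    linarith [mul_pos (hc n) h0]
  linarith [pos_of_mul_pos_left hprod h1.le]

theorem exists_isLeast_and_tendsto_zero (hrec : IsThreeTermRecurrence q d c)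
    (hc : ∀ n, 0 < c (n + 2)) (hpos : ∀ n x, x ≤ 0 → 0 < (q n).eval x)
    (hq0 : ∀ x, 0 < (q 0).eval x) (hq1 : ∃ r, IsLeast {x | (q 1).eval x = 0} r)
    (hd : Tendsto d atTop (nhds 0)) :
    (∀ n : ℕ, 1 ≤ n → ∃ μ : ℝ, IsLeast {x : ℝ | (q n).eval x = 0} μ) ∧
    ∀ μ : ℕ → ℝ, (∀ n : ℕ, 1 ≤ n → IsLeast {x : ℝ | (q n).eval x = 0} (μ n)) →
      Tendsto μ atTop (nhds 0) := by
  refine ⟨fun n hn => ?_, fun μ hμ => ?_⟩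
  · obtain ⟨r, _, hr, _⟩ := hrec.exists_isLeast_succ_lt hc hpos hq0 hq1 hn
    exact ⟨r, hr⟩
  have hanti : ∀ n, 1 ≤ n → μ (n + 1) < μ n := fun n hn => by
    obtain ⟨r, r', hr, hr', hlt⟩ := hrec.exists_isLeast_succ_lt hc hpos hq0 hq1 hn
    rwa [(hμ n hn).unique hr, (hμ (n + 1) (by omega)).unique hr']
  have hlt : ∀ n, μ (n + 2) < d (n + 2) := fun n => by
    have h0 : 0 < (q n).eval (μ (n + 2)) := by
      rcases n.eq_zero_or_pos with rfl | hn
      · exact hq0 _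
      · exact eval_pos_of_lt_isLeast hpos (hμ n hn)
          ((hanti (n + 1) (by omega)).trans (hanti n hn))
    exact hrec.lt_of_eval_eq_zero hc (hμ (n + 2) (by omega)).1
      (eval_pos_of_lt_isLeast hpos (hμ (n + 1) (by omega)) (hanti (n + 1) (by omega))) h0
  refine tendsto_of_tendsto_of_tendsto_of_le_of_le' tendsto_const_nhds hd ?_ ?_ <;>
    filter_upwards [eventually_ge_atTop 2] with n hn <;>
    obtain ⟨k, rfl⟩ := Nat.exists_eq_add_of_le' hn
  · exact (pos_of_eval_eq_zero hpos (hμ (k + 2) (by omega)).1).le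
  · exact (hlt k).le

end IsThreeTermRecurrence

/-- Chosen so that `CcoJ_le_jacobiRatioBound_mul` is an equality at `η = 1`. -/
noncomputable def jacobiRatioBound (a b : ℝ) (n : ℕ) : ℝ :=
  2 * (n + a) / (n * (2 * n + a + b) * (2 * n + a + b - 1))

/-- `-B_n` for `ε = -1`, `ξ = η`. -/
noncomputable def jacobiDiag (a b η : ℝ) (n : ℕ) : ℝ :=
  (η - (b - a) * (a + b - 2) / ((2 * n + a + b - 2) * (2 * n + a + b))) / (n * (n + a + b - 1))

/-- The zero of `A_1` for `ε = -1`, `ξ = η`. -/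
noncomputable def jacobiFirstZero (a b η : ℝ) : ℝ :=
  ((1 + a + b) * (2 + a + b) * η ^ 2 + 2 * (a - b) * (1 + a + b) * η + (a - b) ^ 2 - (2 + a + b)) /
    ((1 + a + b) * (2 + a + b) * (η * (a + b) + a - b))

theorem tendsto_jacobiDiag (a b η : ℝ) : Tendsto (jacobiDiag a b η) atTop (nhds 0) := by
  have hlin : ∀ k c : ℝ, 0 < k → Tendsto (fun n : ℕ => k * n + c) atTop atTop := fun k c hk =>
    tendsto_atTop_add_const_right _ c (tendsto_natCast_atTop_atTop.const_mul_atTop hk)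
  have hD1 : Tendsto (fun n : ℕ => (2 * n + a + b - 2) * (2 * n + a + b)) atTop atTop :=
    ((hlin 2 (a + b - 2) two_pos).atTop_mul_atTop₀ (hlin 2 (a + b) two_pos)).congr
      fun n => by ring
  have hD2 : Tendsto (fun n : ℕ => n * (n + a + b - 1)) atTop atTop :=
    ((hlin 1 0 one_pos).atTop_mul_atTop₀ (hlin 1 (a + b - 1) one_pos)).congr fun n => by ring
  exact ((tendsto_const_nhds (x := η)).sub (tendsto_const_nhds.div_atTop hD1)).div_atTop hD2

section Jacobi

variable {a b η : ℝ}

theorem jacobiRatioBound_pos (ha : 0 < a) (hb : 0 < b) (n : ℕ) :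
    0 < jacobiRatioBound a b (n + 1) := by
  unfold jacobiRatioBound
  have : (0 : ℝ) < 2 * ((n + 1 : ℕ) : ℝ) + a + b - 1 := by
    push_cast; linarith [n.cast_nonneg (α := ℝ)]
  positivity

theorem CcoJ_pos (ha : 0 < a) (hb : 0 < b) (n : ℕ) : 0 < CcoJ a b (n + 2) := by
  unfold CcoJ
  push_cast
  have hn : (0 : ℝ) ≤ n := n.cast_nonneg
  have h1 : (0 : ℝ) < n + 2 + a - 1 := by linarith
  have h2 : (0 : ℝ) < n + 2 + b - 1 := by linarith
  have h3 : (0 : ℝ) < n + 2 - 1 := by linarith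
  have h4 : (0 : ℝ) < n + 2 + a + b - 1 := by linarith
  have h5 : (0 : ℝ) < 2 * (n + 2) + a + b - 1 := by linarith
  have h6 : (0 : ℝ) < 2 * (n + 2) + a + b - 2 := by linarith
  have h7 : (0 : ℝ) < 2 * (n + 2) + a + b - 3 := by linarith
  positivity

theorem CcoJ_le_jacobiRatioBound_mul (ha : 0 < a) (hb : 0 < b) (hη : 1 ≤ η) (n : ℕ) :
    CcoJ a b (n + 2) ≤
      jacobiRatioBound a b (n + 1) * (jacobiDiag a b η (n + 2) - jacobiRatioBound a b (n + 2)) := by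
  have hn : (0 : ℝ) ≤ n := n.cast_nonneg
  have hη' : 0 ≤ η - 1 := sub_nonneg.2 hη
  have key : jacobiRatioBound a b (n + 1) *
      (jacobiDiag a b η (n + 2) - jacobiRatioBound a b (n + 2)) - CcoJ a b (n + 2) =
      2 * (η - 1) * (n + 1 + a) * (2 * n + a + b + 2) * (2 * n + a + b + 3) *
        (2 * n + a + b + 4) / ((n + 1) * (n + 2) * (n + a + b + 1) * (2 * n + a + b + 1) *
        (2 * n + a + b + 2) ^ 2 * (2 * n + a + b + 3) * (2 * n + a + b + 4)) := by
    unfold jacobiRatioBound jacobiDiag CcoJ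
    push_cast
    have h1 : (2 * (n + 1) + a + b - 1 : ℝ) ≠ 0 := by linarith
    have h2 : (2 * (n + 2) + a + b - 2 : ℝ) ≠ 0 := by linarith
    have h3 : (n + 2 + a + b - 1 : ℝ) ≠ 0 := by linarith
    have h4 : (2 * (n + 2) + a + b - 1 : ℝ) ≠ 0 := by linarith
    have h5 : (n + 2 - 1 : ℝ) ≠ 0 := by linarith
    have h6 : (2 * (n + 2) + a + b - 3 : ℝ) ≠ 0 := by linarith
    field_simp
    ring
  rw [← sub_nonneg, key]
  positivity

theorem jacobiRatioBound_one_le_jacobiFirstZero (ha : 0 < a) (hb : 0 < b) (hη : 1 ≤ η) :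
    jacobiRatioBound a b 1 ≤ jacobiFirstZero a b η := by
  have hη' : 0 ≤ η - 1 := sub_nonneg.2 hη
  have hden : 0 < η * (a + b) + a - b := by nlinarith
  have key : jacobiFirstZero a b η - jacobiRatioBound a b 1 =
      (η - 1) * ((η - 1) * (a + b + 1) + 2 * (a + 1)) / ((1 + a + b) * (η * (a + b) + a - b)) := by
    unfold jacobiFirstZero jacobiRatioBound
    push_cast
    have h1 : (2 + a + b - 1 : ℝ) ≠ 0 := by linarith
    field_simp
    ring
  rw [← sub_nonneg, key]
  positivity

theorem exists_isLeast_and_tendsto_zero_of_jacobi (ha : 0 < a) (hb : 0 < b) (hη : 1 ≤ η)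
    {q : ℕ → ℝ[X]} (hq0 : q 0 = 1) (hq1 : q 1 = C (jacobiFirstZero a b η) - X)
    (hrec : IsThreeTermRecurrence q (jacobiDiag a b η) (CcoJ a b)) :
    (∀ n : ℕ, 1 ≤ n → ∃ μ : ℝ, IsLeast {x : ℝ | (q n).eval x = 0} μ) ∧
    ∀ μ : ℕ → ℝ, (∀ n : ℕ, 1 ≤ n → IsLeast {x : ℝ | (q n).eval x = 0} (μ n)) →
      Tendsto μ atTop (nhds 0) := by
  have hpos : ∀ n x, x ≤ 0 → 0 < (q n).eval x := fun n x hx => by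
    refine (hrec.eval_pos_and_ratio_le_of_nonpos (fun n => (CcoJ_pos ha hb n).le)
      (jacobiRatioBound_pos ha hb) (CcoJ_le_jacobiRatioBound_mul ha hb hη) hx
      (by simp [hq0]) ?_ n).1
    rw [hq0, hq1, eval_one, mul_one, eval_sub, eval_C, eval_X]
    linarith [jacobiRatioBound_one_le_jacobiFirstZero ha hb hη]
  have hroots1 : {x | (q 1).eval x = 0} = {jacobiFirstZero a b η} := by
    ext; simp [hq1, sub_eq_zero, eq_comm]
  exact hrec.exists_isLeast_and_tendsto_zero (CcoJ_pos ha hb) hpos (by simp [hq0])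
    ⟨_, hroots1 ▸ isLeast_singleton⟩ (tendsto_jacobiDiag a b η)

end Jacobi

theorem CcoJ_comm (α β : ℝ) : CcoJ α β = CcoJ β α := by
  ext n; unfold CcoJ; ring_nf

theorem BcoJ_neg_one (α β ξ : ℝ) (n : ℕ) : BcoJ α β ξ (-1) n = -jacobiDiag α β ξ n := by
  unfold BcoJ jacobiDiag; ring

theorem BcoJ_one (α β ξ : ℝ) (n : ℕ) : BcoJ α β ξ 1 n = -jacobiDiag β α (-ξ) n := by
  unfold BcoJ jacobiDiag; ring

theorem ApolyJ_one_of_eps_neg_one (α β ξ : ℝ) :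
    ApolyJ α β ξ (-1) 1 = X - C (jacobiFirstZero α β ξ) := by
  rw [ApolyJ, sub_eq_add_neg X, ← C_neg, jacobiFirstZero]
  congr 2
  ring

theorem ApolyJ_one_of_eps_one (α β ξ : ℝ) :
    ApolyJ α β ξ 1 1 = X - C (jacobiFirstZero β α (-ξ)) := by
  have hden : (1 + β + α) * (2 + β + α) * (-ξ * (β + α) + β - α) =
      -((1 + α + β) * (2 + α + β) * (ξ * (α + β) - β + α)) := by ring
  rw [ApolyJ, sub_eq_add_neg X, ← C_neg, jacobiFirstZero, hden, div_neg, neg_neg]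
  congr 2
  ring

theorem exists_jacobi_normalization {α β ξ ε : ℝ} (hα : 0 < α) (hβ : 0 < β) (hξ : 1 < |ξ|)
    (hε : ε = if ξ < -1 then 1 else -1) :
    ∃ a b η : ℝ, 0 < a ∧ 0 < b ∧ 1 ≤ η ∧ CcoJ α β = CcoJ a b ∧
      (∀ n, BcoJ α β ξ ε n = -jacobiDiag a b η n) ∧
      ApolyJ α β ξ ε 1 = X - C (jacobiFirstZero a b η) := by
  split_ifs at hε with hξneg <;> subst hε
  · exact ⟨β, α, -ξ, hβ, hα, by linarith, CcoJ_comm α β, BcoJ_one α β ξ,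
      ApolyJ_one_of_eps_one α β ξ⟩
  · refine ⟨α, β, ξ, hα, hβ, ?_, rfl, BcoJ_neg_one α β ξ, ApolyJ_one_of_eps_neg_one α β ξ⟩
    rcases lt_abs.1 hξ with h | h <;> linarith

theorem stmt17 (α β ξ ε : ℝ) (hα : 0 < α) (hβ : 0 < β) (hξ : 1 < |ξ|)
    (hε : ε = if ξ < -1 then 1 else -1) :
    (∀ n : ℕ, 1 ≤ n → ∃ μ : ℝ, IsLeast {x : ℝ | (ApolyJ α β ξ ε n).eval x = 0} μ) ∧
    ∀ μ : ℕ → ℝ, (∀ n : ℕ, 1 ≤ n → IsLeast {x : ℝ | (ApolyJ α β ξ ε n).eval x = 0} (μ n)) →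
      Tendsto μ atTop (nhds 0) := by
  obtain ⟨a, b, η, ha, hb, hη, hC, hB, hA1⟩ := exists_jacobi_normalization hα hβ hξ hε
  set q : ℕ → ℝ[X] := fun n => C ((-1) ^ n) * ApolyJ α β ξ ε n
  have hroots : ∀ n, {x | (q n).eval x = 0} = {x | (ApolyJ α β ξ ε n).eval x = 0} :=
    fun n => by ext; simp [q]
  have hrec : IsThreeTermRecurrence q (jacobiDiag a b η) (CcoJ a b) := fun n x => by
    simp only [q, ApolyJ, hB, hC, eval_mul, eval_sub, eval_add, eval_C, eval_X, pow_succ]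
    ring
  have := exists_isLeast_and_tendsto_zero_of_jacobi ha hb hη (q := q) (by simp [q, ApolyJ])
    (by simp [q, hA1]) hrec
  simpa only [hroots] using this
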